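/- arXiv:math/0312227 — 3 statements merged into one kernel-verified Lean document; each statement's English description precedes it below -/
import Mathlib

section
/- Let p be an odd prime and let u ∈ ℚ_p satisfy ‖u‖ = 1 and suppose u is not a square in ℚ_p. Let A = [[1+p, 1],[2p+p², 1+p]] and B = [[1+p, u⁻¹],[(2p+p²)·u, 1+p]], viewed as 2×2 matrices over ℚ_p. Then there is no matrix M over ℚ_p with det M = 1 and A · M = M · B; that is, A and B are not conjugate in SL(2, ℚ_p). -/
/-!
Conjugating `A` into `B` forces `M = [[a, b], [b c u, a u⁻¹]]` with `c = 2p + p²`, and then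
`det M = 1` reads `u = a² - c (b u)²`. Since `‖c‖ = p⁻¹` has odd valuation, the two terms have
different norms, so the unit `u` is congruent modulo `p` to the square of the unit `a`; for odd
`p`, Hensel's lemma then makes `u` a square.
-/

open Polynomial

lemma Matrix.sq_sub_mul_sq_eq_of_mul_eq_mul {K : Type*} [Field K] {t c u : K} (hu : u ≠ 0)
    {M : Matrix (Fin 2) (Fin 2) K} (hM : !![t, 1; c, t] * M = M * !![t, u⁻¹; c * u, t])
    (hdet : M.det = 1) : M 0 0 ^ 2 - c * (M 0 1 * u) ^ 2 = u := by
  have h00 := congrFun (congrFun hM 0) 0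
  have h01 := congrFun (congrFun hM 0) 1
  simp only [Matrix.mul_apply, Fin.sum_univ_two, Matrix.of_apply, Matrix.cons_val',
    Matrix.cons_val_zero, Matrix.cons_val_one, Matrix.empty_val', Matrix.cons_val_fin_one]
    at h00 h01
  have h10 : M 1 0 = M 0 1 * (c * u) := by linear_combination h00
  have h11 : M 1 1 = M 0 0 * u⁻¹ := by linear_combination h01
  rw [Matrix.det_fin_two, h10, h11] at hdet
  field_simp at hdet
  linear_combination hdet

variable {p : ℕ} [Fact p.Prime]

lemma PadicInt.norm_two_eq_one (hp : p ≠ 2) : ‖(2 : ℤ_[p])‖ = 1 := by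
  simpa using PadicInt.norm_natCast_eq_one_iff.2 ((Nat.coprime_primes Fact.out Nat.prime_two).2 hp)

lemma PadicInt.exists_sq_eq_of_norm_sub_sq_lt_one (hp : p ≠ 2) {a v : ℤ_[p]} (ha : ‖a‖ = 1)
    (hv : ‖v - a ^ 2‖ < 1) : ∃ y, y ^ 2 = v := by
  have hderiv : ‖aeval a (X ^ 2 - C v : ℤ_[p][X]).derivative‖ = 1 := by
    simp [← two_mul, norm_two_eq_one hp, ha]
  have hval : ‖aeval a (X ^ 2 - C v : ℤ_[p][X])‖ < 1 := by
    simpa [norm_sub_rev] using hv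
  obtain ⟨y, hy, -⟩ := hensels_lemma (F := X ^ 2 - C v) (a := a) (by rwa [hderiv, one_pow])
  exact ⟨y, by simpa [sub_eq_zero] using hy⟩

lemma Padic.exists_sq_eq_of_norm_sub_sq_lt_one (hp : p ≠ 2) {a v : ℚ_[p]} (ha : ‖a‖ = 1)
    (hv : ‖v - a ^ 2‖ < 1) : ∃ y, y ^ 2 = v := by
  have hv_le : ‖v‖ ≤ 1 :=
    calc ‖v‖ = ‖(v - a ^ 2) + a ^ 2‖ := by rw [sub_add_cancel]
      _ ≤ max ‖v - a ^ 2‖ ‖a ^ 2‖ := Padic.nonarchimedean _ _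
      _ ≤ 1 := max_le hv.le (by rw [norm_pow, ha, one_pow])
  obtain ⟨y, hy⟩ := PadicInt.exists_sq_eq_of_norm_sub_sq_lt_one (a := ⟨a, ha.le⟩)
    (v := ⟨v, hv_le⟩) hp ha hv
  exact ⟨y, by simpa using congrArg ((↑) : ℤ_[p] → ℚ_[p]) hy⟩

lemma Padic.norm_sq_ne_inv_prime (z : ℚ_[p]) : ‖z‖ ^ 2 ≠ (p : ℝ)⁻¹ := by
  have hp : (1 : ℝ) < p := mod_cast (Fact.out : p.Prime).one_lt
  rcases eq_or_ne z 0 with rfl | hz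
  · simpa using (inv_pos.2 (zero_lt_one.trans hp)).ne
  intro h
  rw [Padic.norm_eq_zpow_neg_valuation hz, ← zpow_natCast, ← zpow_mul, ← zpow_neg_one] at h
  have := zpow_right_injective₀ (zero_lt_one.trans hp) hp.ne' h
  omega

lemma Padic.norm_sq_ne_norm_mul_sq {c : ℚ_[p]} (hc : ‖c‖ = (p : ℝ)⁻¹) (x : ℚ_[p]) {y : ℚ_[p]}
    (hy : y ≠ 0) : ‖x ^ 2‖ ≠ ‖c * y ^ 2‖ := by
  intro h
  apply Padic.norm_sq_ne_inv_prime (x / y)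
  rw [norm_div, div_pow, ← norm_pow, h, norm_mul, hc, norm_pow]
  field_simp [norm_ne_zero_iff.2 hy]

lemma Padic.norm_eq_one_of_norm_sq_sub_mul_sq_eq_one {c x y : ℚ_[p]} (hc : ‖c‖ = (p : ℝ)⁻¹)
    (h : ‖x ^ 2 - c * y ^ 2‖ = 1) : ‖x‖ = 1 ∧ ‖c * y ^ 2‖ < 1 := by
  have hlt : ‖c * y ^ 2‖ < 1 := by
    rcases eq_or_ne y 0 with rfl | hy
    · simp
    have hone : ‖c * y ^ 2‖ ≠ 1 := by simpa using (Padic.norm_sq_ne_norm_mul_sq hc 1 hy).symm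
    have hne : ‖x ^ 2‖ ≠ ‖-(c * y ^ 2)‖ := by
      rw [norm_neg]
      exact Padic.norm_sq_ne_norm_mul_sq hc x hy
    have hmax : max ‖x ^ 2‖ ‖c * y ^ 2‖ = 1 := by
      rw [← h, sub_eq_add_neg, Padic.add_eq_max_of_ne hne, norm_neg]
    exact lt_of_le_of_ne (hmax ▸ le_max_right _ _) hone
  have hx : ‖x‖ ^ 2 = 1 := by
    rw [← norm_pow, ← h]
    exact Padic.norm_eq_of_norm_sub_lt_right (by rwa [sub_sub_cancel, h])
  exact ⟨(pow_eq_one_iff_of_nonneg (norm_nonneg x) two_ne_zero).1 hx, hlt⟩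

lemma Padic.norm_two_mul_add_sq (hp : p ≠ 2) : ‖(2 * p + p ^ 2 : ℚ_[p])‖ = (p : ℝ)⁻¹ := by
  have h : ‖((2 + p : ℕ) : ℚ_[p])‖ = 1 := Padic.norm_natCast_eq_one_iff.2 <|
    Nat.coprime_add_self_right.2 ((Nat.coprime_primes Fact.out Nat.prime_two).2 hp)
  rw [show (2 * p + p ^ 2 : ℚ_[p]) = p * ((2 + p : ℕ) : ℚ_[p]) by push_cast; ring, norm_mul,
    Padic.norm_p, h, mul_one]

/-- For `p` an odd prime and `u` a non-square unit of `ℚ_p`, the stably conjugate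
matrices `A = [[1+p, 1],[2p+p², 1+p]]` and `B = [[1+p, u⁻¹],[(2p+p²)u, 1+p]]` are not
conjugate by any determinant-one matrix over `ℚ_p`. -/
theorem not_conjugate_in_SL2 (p : ℕ) [Fact p.Prime] (hp : p ≠ 2) (u : ℚ_[p])
    (hu : ‖u‖ = 1) (hsq : ¬∃ y : ℚ_[p], y ^ 2 = u) :
    ¬∃ M : Matrix (Fin 2) (Fin 2) ℚ_[p], M.det = 1 ∧
      (!![1 + (p : ℚ_[p]), 1; 2 * p + p ^ 2, 1 + p] : Matrix (Fin 2) (Fin 2) ℚ_[p]) * M =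
        M * (!![1 + (p : ℚ_[p]), u⁻¹; (2 * p + p ^ 2) * u, 1 + p] :
          Matrix (Fin 2) (Fin 2) ℚ_[p]) := by
  rintro ⟨M, hdet, hconj⟩
  have hrep := Matrix.sq_sub_mul_sq_eq_of_mul_eq_mul (norm_ne_zero_iff.1 (hu ▸ one_ne_zero))
    hconj hdet
  obtain ⟨ha, hsmall⟩ := Padic.norm_eq_one_of_norm_sq_sub_mul_sq_eq_one
    (Padic.norm_two_mul_add_sq hp) (hrep ▸ hu)
  refine hsq (Padic.exists_sq_eq_of_norm_sub_sq_lt_one hp ha ?_)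
  rwa [← hrep, sub_sub_cancel_left, norm_neg]
end

section
/- Let p be a prime and u a unit of ℤ_p. The topological Jordan decomposition of u is unique: if u = s₁ · v₁ = s₂ · v₂ where s₁^(p-1) = 1, s₂^(p-1) = 1, and the sequences n ↦ v₁^(p^n) and n ↦ v₂^(p^n) both converge to 1 in ℤ_p, then s₁ = s₂ and v₁ = v₂. In fact each sᵢ necessarily equals lim_{n→∞} u^(p^n). -/
open Filter Topology

theorem pow_pow_eq_self_of_pow_sub_one_eq_one {M : Type*} [Monoid M] {p : ℕ} (hp : p ≠ 0)
    {s : M} (hs : s ^ (p - 1) = 1) (n : ℕ) : s ^ p ^ n = s := by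
  obtain ⟨k, hk⟩ := Nat.sub_one_dvd_pow_sub_one p n
  have hpn : p ^ n = (p - 1) * k + 1 := by
    have := Nat.one_le_pow n p (Nat.pos_of_ne_zero hp)
    omega
  rw [hpn, pow_succ, pow_mul, hs, one_pow, one_mul]

theorem tendsto_pow_pow_of_eq_mul {M : Type*} [CommMonoid M] [TopologicalSpace M]
    [ContinuousMul M] {p : ℕ} (hp : p ≠ 0) {u s v : M} (h : u = s * v)
    (hs : s ^ (p - 1) = 1) (hv : Tendsto (fun n : ℕ => v ^ p ^ n) atTop (𝓝 1)) :
    Tendsto (fun n : ℕ => u ^ p ^ n) atTop (𝓝 s) := by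
  have hpow : (fun n : ℕ => u ^ p ^ n) = fun n => s * v ^ p ^ n := by
    funext n
    rw [h, mul_pow, pow_pow_eq_self_of_pow_sub_one_eq_one hp hs]
  simpa [hpow] using hv.const_mul s

theorem topological_jordan_decomposition_unique_general (p : ℕ) [Fact p.Prime] (u : ℤ_[p])
    (s₁ v₁ s₂ v₂ : ℤ_[p])
    (h₁ : u = s₁ * v₁) (h₂ : u = s₂ * v₂)
    (hs₁ : s₁ ^ (p - 1) = 1) (hs₂ : s₂ ^ (p - 1) = 1)
    (hv₁ : Tendsto (fun n : ℕ => v₁ ^ p ^ n) atTop (nhds 1))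
    (hv₂ : Tendsto (fun n : ℕ => v₂ ^ p ^ n) atTop (nhds 1)) :
    s₁ = s₂ ∧ v₁ = v₂ ∧ Tendsto (fun n : ℕ => u ^ p ^ n) atTop (nhds s₁) := by
  have hprime : p.Prime := Fact.out
  have hlim₁ := tendsto_pow_pow_of_eq_mul hprime.ne_zero h₁ hs₁ hv₁
  have hlim₂ := tendsto_pow_pow_of_eq_mul hprime.ne_zero h₂ hs₂ hv₂
  have hs : s₁ = s₂ := tendsto_nhds_unique hlim₁ hlim₂
  have hunit : IsUnit s₁ := .of_pow_eq_one hs₁ (Nat.sub_ne_zero_of_lt hprime.one_lt)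
  refine ⟨hs, hunit.mul_left_cancel ?_, hlim₁⟩
  rw [← h₁, hs, h₂]

/-- Uniqueness of the topological Jordan decomposition of a unit `u` of `ℤ_p`:
if `u = s₁v₁ = s₂v₂` with `sᵢ^(p-1) = 1` and `vᵢ` topologically unipotent, then
`s₁ = s₂`, `v₁ = v₂`, and `s₁ = lim u^(p^n)`. -/
theorem topological_jordan_decomposition_unique (p : ℕ) [Fact p.Prime] (u : ℤ_[p])
    (hu : ‖u‖ = 1) (s₁ v₁ s₂ v₂ : ℤ_[p])
    (h₁ : u = s₁ * v₁) (h₂ : u = s₂ * v₂)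
    (hs₁ : s₁ ^ (p - 1) = 1) (hs₂ : s₂ ^ (p - 1) = 1)
    (hv₁ : Tendsto (fun n : ℕ => v₁ ^ p ^ n) atTop (nhds 1))
    (hv₂ : Tendsto (fun n : ℕ => v₂ ^ p ^ n) atTop (nhds 1)) :
    s₁ = s₂ ∧ v₁ = v₂ ∧ Tendsto (fun n : ℕ => u ^ p ^ n) atTop (nhds s₁) :=
  topological_jordan_decomposition_unique_general p u s₁ v₁ s₂ v₂ h₁ h₂ hs₁ hs₂ hv₁ hv₂
end

section
/- Let p be a prime and n a positive natural number, and let K = GL(n, ℤ_p) be the subgroup of GL(n, ℚ_p) consisting of invertible matrices M such that M and M⁻¹ both have all entries of norm at most 1. If K' is a compact subgroup of GL(n, ℚ_p) with K ⊆ K', then K' = K; that is, GL(n, ℤ_p) is a maximal compact subgroup of GL(n, ℚ_p). -/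
/-!
If a compact subgroup `S ⊇ GL(n, ℤ_p)` contained some `g` with an entry `a = g i j` of norm `> 1`,
choose that entry of maximal norm. Column operations by elements of `GL(n, ℤ_p)` (a shear that
clears row `i` of `g` except at `a`, which is integral since `a` dominates the row, then the
transposition of columns `i` and `j`) give `N ∈ S` whose `i`-th row is `a • eᵢ`. Then
`(N ^ m) i i = a ^ m` is unbounded, contradicting compactness.
-/

open Matrix

namespace Matrix

variable {n R 𝕜 : Type*} [Fintype n] [DecidableEq n]

section Ring

variable [Ring R]

lemma vecMulVec_single_mul_self {j : n} {w : n → R} (hw : w j = 0) :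
    vecMulVec (Pi.single j 1) w * vecMulVec (Pi.single j 1) w = 0 := by
  simp [vecMulVec_mul_vecMulVec, dotProduct_single, hw]

def shearGL (j : n) (w : n → R) (hw : w j = 0) : GL n R where
  val := 1 + vecMulVec (Pi.single j 1) w
  inv := 1 + vecMulVec (Pi.single j 1) (-w)
  val_inv := by simp [vecMulVec_neg, mul_add, add_mul, vecMulVec_single_mul_self hw]
  inv_val := by simp [vecMulVec_neg, mul_add, add_mul, vecMulVec_single_mul_self hw]

lemma vecMul_shearGL (r : n → R) (j : n) (w : n → R) (hw : w j = 0) :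
    r ᵥ* (shearGL j w hw : Matrix n n R) = r + r j • w := by
  simp [shearGL, vecMul_add, vecMul_vecMulVec, dotProduct_single]

end Ring

lemma vecMul_pow_eq_pow_smul [CommSemiring R] {A : Matrix n n R} {v : n → R} {a : R}
    (h : v ᵥ* A = a • v) (m : ℕ) : v ᵥ* A ^ m = a ^ m • v := by
  induction m with
  | zero => simp
  | succ m ih => rw [pow_succ, ← vecMul_vecMul, ih, smul_vecMul, h, smul_smul, pow_succ]

section Field

variable [Field 𝕜]

def rowClearingGL (r : n → 𝕜) (j : n) : GL n 𝕜 :=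
  shearGL j (-(r j)⁻¹ • Function.update r j 0) (by simp)

lemma vecMul_rowClearingGL {r : n → 𝕜} {j : n} (hr : r j ≠ 0) :
    r ᵥ* (rowClearingGL r j : Matrix n n 𝕜) = Pi.single j (r j) := by
  ext l
  rw [rowClearingGL, vecMul_shearGL]
  rcases eq_or_ne l j with rfl | hl
  · simp
  · simp [hl, hr]

lemma single_vecMul_mul_rowClearingGL_mul_swap {A : Matrix n n 𝕜} {i j : n}
    (hA : A i j ≠ 0) :
    Pi.single i 1 ᵥ* (A * (rowClearingGL (A i) j : Matrix n n 𝕜) * swap 𝕜 i j) =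
      A i j • Pi.single i 1 := by
  rw [← vecMul_vecMul, ← vecMul_vecMul, single_one_vecMul, row, vecMul_rowClearingGL hA,
    vecMul_swap]
  ext l
  rcases eq_or_ne l i with rfl | hli
  · simp
  · rcases eq_or_ne l j with rfl | hlj
    · simp [hli]
    · simp [hli, hlj, Equiv.swap_apply_of_ne_of_ne hli hlj]

end Field

section NormedField

variable [NormedField 𝕜]

omit [Fintype n] in
lemma norm_swap_apply_le (i j k l : n) : ‖Matrix.swap 𝕜 i j k l‖ ≤ 1 := by
  simp only [Matrix.swap, Equiv.Perm.permMatrix, PEquiv.toMatrix_apply]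
  split_ifs <;> simp

lemma norm_le_one_of_single_vecMul_eq_smul {S : Subgroup (GL n 𝕜)}
    (hS : IsCompact (S : Set (GL n 𝕜))) {g : GL n 𝕜} (hg : g ∈ S) {i : n} {a : 𝕜}
    (h : Pi.single i 1 ᵥ* (g : Matrix n n 𝕜) = a • Pi.single i 1) : ‖a‖ ≤ 1 := by
  by_contra! ha
  have hpow (m : ℕ) : ((g ^ m : GL n 𝕜) : Matrix n n 𝕜) i i = a ^ m := by
    simpa using congrFun (vecMul_pow_eq_pow_smul h m) i
  obtain ⟨C, hC⟩ := hS.exists_bound_of_continuousOn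
    (f := fun g : GL n 𝕜 => (g : Matrix n n 𝕜) i i) (Units.continuous_val.matrix_elem i i).continuousOn
  obtain ⟨m, hm⟩ := pow_unbounded_of_one_lt C ha
  have hbound := hC _ (pow_mem hg m)
  simp only [hpow, norm_pow] at hbound
  linarith

end NormedField

section Ultrametric

variable [NormedField 𝕜] [IsUltrametricDist 𝕜]

omit [Fintype n] in
lemma norm_one_add_vecMulVec_single_apply_le {j : n} {w : n → 𝕜} (hw : ∀ l, ‖w l‖ ≤ 1)
    (k l : n) : ‖(1 + vecMulVec (Pi.single j 1) w) k l‖ ≤ 1 := by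
  refine (IsUltrametricDist.norm_add_le_max _ _).trans (max_le ?_ ?_)
  · rw [one_apply]; split_ifs <;> simp
  · rw [vecMulVec_apply, Pi.single_apply]; split_ifs <;> simp [hw l]

lemma norm_rowClearingGL_apply_le {r : n → 𝕜} {j : n} (hmax : ∀ l, ‖r l‖ ≤ ‖r j‖) (k l : n) :
    ‖(rowClearingGL r j : Matrix n n 𝕜) k l‖ ≤ 1 ∧
      ‖((rowClearingGL r j)⁻¹ : GL n 𝕜) k l‖ ≤ 1 := by
  have hw : ∀ l, ‖(-(r j)⁻¹ • Function.update r j 0) l‖ ≤ 1 := by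
    intro l
    rcases eq_or_ne l j with rfl | hl
    · simp
    · rcases eq_or_ne (r j) 0 with h0 | h0
      · simp [h0]
      · simpa [hl, norm_inv, inv_mul_le_one₀ (norm_pos_iff.2 h0)] using hmax l
  exact ⟨norm_one_add_vecMulVec_single_apply_le hw k l,
    norm_one_add_vecMulVec_single_apply_le (fun l => (norm_neg _).trans_le (hw l)) k l⟩

theorem norm_apply_le_one_of_isCompact {S : Subgroup (GL n 𝕜)}
    (hS : IsCompact (S : Set (GL n 𝕜)))
    (hintegral : ∀ g : GL n 𝕜, (∀ k l, ‖(g : Matrix n n 𝕜) k l‖ ≤ 1) →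
      (∀ k l, ‖((g⁻¹ : GL n 𝕜) : Matrix n n 𝕜) k l‖ ≤ 1) → g ∈ S)
    {g : GL n 𝕜} (hg : g ∈ S) (k l : n) : ‖(g : Matrix n n 𝕜) k l‖ ≤ 1 := by
  by_contra! hkl
  obtain ⟨⟨i, j⟩, -, hmax⟩ := Finset.univ.exists_max_image
    (fun q : n × n => ‖(g : Matrix n n 𝕜) q.1 q.2‖) ⟨(k, l), Finset.mem_univ _⟩
  have ha : 1 < ‖(g : Matrix n n 𝕜) i j‖ := hkl.trans_le (hmax (k, l) (Finset.mem_univ _))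
  have hrowmax : ∀ l, ‖(g : Matrix n n 𝕜) i l‖ ≤ ‖(g : Matrix n n 𝕜) i j‖ :=
    fun l => hmax (i, l) (Finset.mem_univ _)
  have hclear : rowClearingGL ((g : Matrix n n 𝕜) i) j ∈ S :=
    hintegral _ (fun k l => (norm_rowClearingGL_apply_le hrowmax k l).1)
      (fun k l => (norm_rowClearingGL_apply_le hrowmax k l).2)
  have hswap : GeneralLinearGroup.swap 𝕜 i j ∈ S :=
    hintegral _ (norm_swap_apply_le i j) (norm_swap_apply_le i j)
  refine ha.not_ge (norm_le_one_of_single_vecMul_eq_smul (i := i) hS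
    (mul_mem (mul_mem hg hclear) hswap) ?_)
  exact single_vecMul_mul_rowClearingGL_mul_swap (norm_pos_iff.1 (one_pos.trans ha))

end Ultrametric

end Matrix

theorem glZp_maximal_compact_general (p : ℕ) [Fact p.Prime] (n : ℕ)
    (K : Subgroup (GL (Fin n) ℚ_[p]))
    (hK : ∀ M : GL (Fin n) ℚ_[p], M ∈ K ↔
      (∀ i j, ‖(M : Matrix (Fin n) (Fin n) ℚ_[p]) i j‖ ≤ 1) ∧
      (∀ i j, ‖((M⁻¹ : GL (Fin n) ℚ_[p]) : Matrix (Fin n) (Fin n) ℚ_[p]) i j‖ ≤ 1))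
    (K' : Subgroup (GL (Fin n) ℚ_[p])) (hK' : IsCompact (K' : Set (GL (Fin n) ℚ_[p])))
    (hle : K ≤ K') : K' = K := by
  have hintegral (M : GL (Fin n) ℚ_[p]) h h' : M ∈ K' := hle ((hK M).2 ⟨h, h'⟩)
  refine le_antisymm (fun M hM => (hK M).2 ⟨?_, ?_⟩) hle
  · exact norm_apply_le_one_of_isCompact hK' hintegral hM
  · exact norm_apply_le_one_of_isCompact hK' hintegral (K'.inv_mem hM)

/-- `GL(n, ℤ_p)` — the subgroup of `GL(n, ℚ_p)` of matrices `M` such that `M` and `M⁻¹`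
have all entries of norm at most `1` — is a maximal compact subgroup of `GL(n, ℚ_p)`:
any compact subgroup containing it equals it. -/
theorem glZp_maximal_compact (p : ℕ) [Fact p.Prime] (n : ℕ) (hn : 0 < n)
    (K : Subgroup (GL (Fin n) ℚ_[p]))
    (hK : ∀ M : GL (Fin n) ℚ_[p], M ∈ K ↔
      (∀ i j, ‖(M : Matrix (Fin n) (Fin n) ℚ_[p]) i j‖ ≤ 1) ∧
      (∀ i j, ‖((M⁻¹ : GL (Fin n) ℚ_[p]) : Matrix (Fin n) (Fin n) ℚ_[p]) i j‖ ≤ 1))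
    (K' : Subgroup (GL (Fin n) ℚ_[p])) (hK' : IsCompact (K' : Set (GL (Fin n) ℚ_[p])))
    (hle : K ≤ K') : K' = K :=
  glZp_maximal_compact_general p n K hK K' hK' hle
end
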